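/- arXiv:1912.09840 — 2 statements merged into one kernel-verified Lean document; each statement's English description precedes it below -/
import Mathlib

section
/- For δ small enough: if ζ ∈ ℂⁿ satisfies |Im ζ| ≤ δ⟨Re ζ⟩ and |Re ζ| ≥ 1, then the principal branch square root ⟨ζ⟩ := (1 + ζ·ζ)^{1/2} is well defined (1 + ζ·ζ avoids the negative real axis) and satisfies Re⟨ζ⟩ ≥ |ζ|/2, |Im⟨ζ⟩| ≤ |ζ|/16, and |ζ| ≥ 1/2. -/
/-! For `δ ≤ 1/64` and `|Re ζ| ≥ 1` we get `|Im ζ| ≤ |Re ζ|/32`, so `w = 1 + ζ·ζ` has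
`Re w = 1 + |Re ζ|² - |Im ζ|² ≥ |ζ|²/4` and `|Im w| = 2|⟨Re ζ, Im ζ⟩| ≤ |ζ|²/16`. For the
principal root `s = w^{1/2}` one has `Re s = √((|w| + Re w)/2) ≥ √(Re w)` and `Im w = 2 Re s Im s`,
which turns these two bounds into `Re s ≥ |ζ|/2` and `|Im s| ≤ |ζ|/16`. -/

open Complex

noncomputable section

/-- The Japanese bracket `⟨ξ⟩ = (1+|ξ|²)^{1/2}` on `ℝⁿ`. -/
def jbr {n : ℕ} (ξ : EuclideanSpace ℝ (Fin n)) : ℝ :=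
  Real.sqrt (1 + ‖ξ‖ ^ 2)

/-- Real part of a vector `ζ ∈ ℂⁿ`. -/
def reVec {n : ℕ} (ζ : EuclideanSpace ℂ (Fin n)) : EuclideanSpace ℝ (Fin n) :=
  (WithLp.equiv 2 (Fin n → ℝ)).symm fun j => (ζ j).re

/-- Imaginary part of a vector `ζ ∈ ℂⁿ`. -/
def imVec {n : ℕ} (ζ : EuclideanSpace ℂ (Fin n)) : EuclideanSpace ℝ (Fin n) :=
  (WithLp.equiv 2 (Fin n → ℝ)).symm fun j => (ζ j).im

namespace Complex

lemma sqrt_re_le_re_cpow_inv_two (w : ℂ) : √w.re ≤ (w ^ (2⁻¹ : ℂ)).re := by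
  rw [cpow_inv_two_re]
  exact Real.sqrt_le_sqrt (by linarith [re_le_norm w])

lemma im_eq_two_mul_re_cpow_inv_two_mul_im (w : ℂ) :
    w.im = 2 * (w ^ (2⁻¹ : ℂ)).re * (w ^ (2⁻¹ : ℂ)).im := by
  have hsq : (w ^ (2⁻¹ : ℂ)) ^ 2 = w := by exact_mod_cast cpow_nat_inv_pow w two_ne_zero
  conv_lhs => rw [← hsq]
  rw [sq, mul_im]
  ring

lemma le_re_cpow_inv_two {w : ℂ} {r : ℝ} (hr : 0 ≤ r) (h : r ^ 2 ≤ w.re) :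
    r ≤ (w ^ (2⁻¹ : ℂ)).re :=
  ((Real.le_sqrt hr ((sq_nonneg r).trans h)).2 h).trans
    (sqrt_re_le_re_cpow_inv_two w)

lemma abs_im_cpow_inv_two_le {w : ℂ} {r : ℝ} (hr : 0 < r) (h : r ^ 2 ≤ w.re) :
    |(w ^ (2⁻¹ : ℂ)).im| ≤ |w.im| / (2 * r) := by
  have hre := le_re_cpow_inv_two hr.le h
  rw [le_div_iff₀ (by positivity), im_eq_two_mul_re_cpow_inv_two_mul_im w, abs_mul,
    abs_mul, abs_two, abs_of_pos (hr.trans_le hre)]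
  nlinarith [abs_nonneg (w ^ (2⁻¹ : ℂ)).im]

end Complex

lemma jbr_le_two_mul_norm {n : ℕ} {ξ : EuclideanSpace ℝ (Fin n)} (h : 1 ≤ ‖ξ‖) :
    jbr ξ ≤ 2 * ‖ξ‖ :=
  Real.sqrt_le_iff.2 ⟨by positivity, by nlinarith⟩

section ComplexVector

variable {n : ℕ} (ζ : EuclideanSpace ℂ (Fin n))

@[simp]
lemma reVec_apply (j : Fin n) : reVec ζ j = (ζ j).re := rfl

@[simp]
lemma imVec_apply (j : Fin n) : imVec ζ j = (ζ j).im := rfl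

lemma norm_reVec_sq : ‖reVec ζ‖ ^ 2 = ∑ j, (ζ j).re ^ 2 :=
  EuclideanSpace.real_norm_sq_eq _

lemma norm_imVec_sq : ‖imVec ζ‖ ^ 2 = ∑ j, (ζ j).im ^ 2 :=
  EuclideanSpace.real_norm_sq_eq _

lemma norm_sq_eq_norm_reVec_sq_add_norm_imVec_sq :
    ‖ζ‖ ^ 2 = ‖reVec ζ‖ ^ 2 + ‖imVec ζ‖ ^ 2 := by
  rw [EuclideanSpace.norm_sq_eq, norm_reVec_sq, norm_imVec_sq, ← Finset.sum_add_distrib]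
  congr! 1 with j
  rw [Complex.sq_norm, normSq_apply]
  ring

lemma re_sum_sq : (∑ j, ζ j ^ 2).re = ‖reVec ζ‖ ^ 2 - ‖imVec ζ‖ ^ 2 := by
  rw [re_sum, norm_reVec_sq, norm_imVec_sq, ← Finset.sum_sub_distrib]
  congr! 1 with j
  rw [sq, mul_re]
  ring

lemma im_sum_sq : (∑ j, ζ j ^ 2).im = 2 * inner ℝ (reVec ζ) (imVec ζ) := by
  simp only [im_sum, PiLp.inner_apply, Finset.mul_sum, sq, mul_im]
  refine Finset.sum_congr rfl fun j _ => ?_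
  simp only [reVec_apply, imVec_apply, RCLike.inner_apply, conj_trivial]
  ring

lemma abs_im_sum_sq_le : |(∑ j, ζ j ^ 2).im| ≤ 2 * (‖reVec ζ‖ * ‖imVec ζ‖) := by
  rw [im_sum_sq, abs_mul, abs_two]
  gcongr
  exact abs_real_inner_le_norm _ _

end ComplexVector

/-- Elementary estimates on the analytic continuation `⟨ζ⟩ = (1+ζ·ζ)^{1/2}` of the
Japanese bracket: for `δ` small enough and `|Im ζ| ≤ δ⟨Re ζ⟩`, `|Re ζ| ≥ 1`,
`1 + ζ·ζ` avoids the negative real axis, `Re⟨ζ⟩ ≥ |ζ|/2`, `|Im⟨ζ⟩| ≤ |ζ|/16`, and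
`|ζ| ≥ 1/2`. -/
theorem bracket_analytic_continuation (n : ℕ) :
    ∃ δ₀ : ℝ, 0 < δ₀ ∧ ∀ δ : ℝ, 0 < δ → δ ≤ δ₀ →
      ∀ ζ : EuclideanSpace ℂ (Fin n),
        ‖imVec ζ‖ ≤ δ * jbr (reVec ζ) → 1 ≤ ‖reVec ζ‖ →
        ¬((1 + ∑ j, (ζ j) ^ 2).im = 0 ∧ (1 + ∑ j, (ζ j) ^ 2).re ≤ 0) ∧
        ‖ζ‖ / 2 ≤ (((1 + ∑ j, (ζ j) ^ 2) ^ ((1 : ℂ) / 2)).re) ∧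
        |(((1 + ∑ j, (ζ j) ^ 2) ^ ((1 : ℂ) / 2)).im)| ≤ ‖ζ‖ / 16 ∧
        1 / 2 ≤ ‖ζ‖ := by
  refine ⟨1 / 64, by norm_num, fun δ hδ hδ₀ ζ hy hx => ?_⟩
  set a := ‖reVec ζ‖
  set b := ‖imVec ζ‖
  have hb : b ≤ a / 32 := calc
    b ≤ δ * jbr (reVec ζ) := hy
    _ ≤ 1 / 64 * (2 * a) := by gcongr; exacts [Real.sqrt_nonneg _, jbr_le_two_mul_norm hx]
    _ = a / 32 := by ring
  have hnorm := norm_sq_eq_norm_reVec_sq_add_norm_imVec_sq ζ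
  have hre : (1 + ∑ j, ζ j ^ 2).re = 1 + a ^ 2 - b ^ 2 := by
    rw [add_re, one_re, re_sum_sq]; ring
  have him : |(1 + ∑ j, ζ j ^ 2).im| ≤ 2 * (a * b) := by
    simpa using abs_im_sum_sq_le ζ
  have hb0 : 0 ≤ b := norm_nonneg _
  have hζ : 1 ≤ ‖ζ‖ := by nlinarith [norm_nonneg ζ]
  have hwre : (‖ζ‖ / 2) ^ 2 ≤ (1 + ∑ j, ζ j ^ 2).re := by rw [hre]; nlinarith
  have hwpos : 0 < (1 + ∑ j, ζ j ^ 2).re := hwre.trans_lt' (by positivity)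
  rw [one_div (2 : ℂ)]
  refine ⟨fun h => h.2.not_gt hwpos, Complex.le_re_cpow_inv_two (by positivity) hwre, ?_,
    by linarith⟩
  calc |((1 + ∑ j, ζ j ^ 2) ^ (2⁻¹ : ℂ)).im|
      ≤ |(1 + ∑ j, ζ j ^ 2).im| / (2 * (‖ζ‖ / 2)) :=
        Complex.abs_im_cpow_inv_two_le (by positivity) hwre
    _ ≤ ‖ζ‖ / 16 := by
        rw [div_le_iff₀ (by positivity)]
        nlinarith

end
end

section
/- Let G : T*𝕋ⁿ → ℝ satisfy the S¹ symbol bounds ⟨ξ⟩^{−1+|β|}|∂_x^α∂_ξ^βG| ≤ ε₀ for |α|+|β| ≤ 2. Then for ε₀ sufficiently small the 2-form obtained by pulling back Re(dζ∧dz) to T*𝕋ⁿ via (x,ξ) ↦ (x + iG_ξ(x,ξ), ξ − iG_x(x,ξ)) is a nondegenerate 2-form; i.e. the deformation Λ_G of T*𝕋ⁿ is ℝ-symplectic. -/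
open Complex

noncomputable section

/-- The Japanese bracket on `ℝⁿ` (plain pi type). -/
def Jb {n : ℕ} (ξ : Fin n → ℝ) : ℝ :=
  Real.sqrt (1 + ∑ i, ξ i ^ 2)

/-- The `i`-th coordinate direction in the base (`x`) variables. -/
def ex {n : ℕ} (i : Fin n) : (Fin n → ℝ) × (Fin n → ℝ) := (Pi.single i 1, 0)

/-- The `i`-th coordinate direction in the fiber (`ξ`) variables. -/
def eXi {n : ℕ} (i : Fin n) : (Fin n → ℝ) × (Fin n → ℝ) := (0, Pi.single i 1)

/-- The differential of `z_j = x_j + i ∂_{ξ_j}G` in the direction `w`. -/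
def Dz {n : ℕ} (G : (Fin n → ℝ) × (Fin n → ℝ) → ℝ) (j : Fin n)
    (p w : (Fin n → ℝ) × (Fin n → ℝ)) : ℂ :=
  fderiv ℝ (fun q : (Fin n → ℝ) × (Fin n → ℝ) =>
    ((q.1 j : ℝ) : ℂ) + Complex.I * ((fderiv ℝ G q (eXi j) : ℝ) : ℂ)) p w

/-- The differential of `ζ_j = ξ_j − i ∂_{x_j}G` in the direction `w`. -/
def Dzeta {n : ℕ} (G : (Fin n → ℝ) × (Fin n → ℝ) → ℝ) (j : Fin n)
    (p w : (Fin n → ℝ) × (Fin n → ℝ)) : ℂ :=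
  fderiv ℝ (fun q : (Fin n → ℝ) × (Fin n → ℝ) =>
    ((q.2 j : ℝ) : ℂ) - Complex.I * ((fderiv ℝ G q (ex j) : ℝ) : ℂ)) p w

/-! Let `H` be the Hessian of `G` at `p` and `J = ⟨ξ⟩`. The real part of `∑ⱼ dζⱼ ∧ dzⱼ` is the
standard form `dξ ∧ dx` plus a correction quadratic in `H`. In the weighted norm
`‖(x, ξ)‖ = J |x|₁ + |ξ|₁` the symbol bounds give `|H w eₓⱼ| ≤ ε ‖w‖` and `|H w e_ξⱼ| ≤ ε/J ‖w‖`.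
Pairing `w = (x, ξ)` with `w' = (ξ/J, -J x)`, which has the same weighted norm, the standard form
gives `(J² |x|₂² + |ξ|₂²) / J`, while the correction is at most
`2n ε² ‖w‖² / J ≤ (2nε)² (J² |x|₂² + |ξ|₂²) / J`; so `2nε < 1` forces `w = 0`. -/

section

variable {n : ℕ}

local notation "E" => (Fin n → ℝ) × (Fin n → ℝ)

theorem fderiv_fderiv_apply_eq {V : Type*} [NormedAddCommGroup V] [NormedSpace ℝ V] {G : V → ℝ}
    {p : V} (hG : DifferentiableAt ℝ (fderiv ℝ G) p) (v w : V) :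
    fderiv ℝ (fun q => fderiv ℝ G q v) p w = fderiv ℝ (fderiv ℝ G) p w v := by
  rw [fderiv_clm_apply hG (differentiableAt_const v)]
  simp

theorem fderiv_ofReal_add_mul_ofReal_apply {V : Type*} [NormedAddCommGroup V] [NormedSpace ℝ V]
    (L : V →L[ℝ] ℝ) (c : ℂ) {g : V → ℝ} {p : V} (hg : DifferentiableAt ℝ g p) (w : V) :
    fderiv ℝ (fun q => (L q : ℂ) + c * g q) p w = L w + c * fderiv ℝ g p w := by
  have h : HasFDerivAt (fun q => (L q : ℂ) + c * g q) _ p :=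
    (ofRealCLM.comp L).hasFDerivAt.add
      ((ofRealCLM.hasFDerivAt.comp p hg.hasFDerivAt).const_mul c)
  rw [h.fderiv]
  simp

theorem Dz_apply {G : E → ℝ} {p : E} (hG : DifferentiableAt ℝ (fderiv ℝ G) p) (j : Fin n)
    (w : E) :
    Dz G j p w = w.1 j + I * fderiv ℝ (fderiv ℝ G) p w (eXi j) := by
  rw [← fderiv_fderiv_apply_eq hG]
  exact fderiv_ofReal_add_mul_ofReal_apply ((ContinuousLinearMap.proj j).comp (.fst ℝ _ _)) I
    (hG.clm_apply (differentiableAt_const _)) w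

theorem Dzeta_apply {G : E → ℝ} {p : E} (hG : DifferentiableAt ℝ (fderiv ℝ G) p) (j : Fin n)
    (w : E) :
    Dzeta G j p w = w.2 j - I * fderiv ℝ (fderiv ℝ G) p w (ex j) := by
  rw [Dzeta, ← fderiv_fderiv_apply_eq hG]
  simp only [sub_eq_add_neg, ← neg_mul]
  exact fderiv_ofReal_add_mul_ofReal_apply ((ContinuousLinearMap.proj j).comp (.snd ℝ _ _)) (-I)
    (hG.clm_apply (differentiableAt_const _)) w

def symplecticForm (w w' : E) : ℝ :=
  ∑ j, (w.2 j * w'.1 j - w'.2 j * w.1 j)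

def hessianCorrection (H : E →L[ℝ] E →L[ℝ] ℝ) (w w' : E) : ℝ :=
  ∑ j, (H w (ex j) * H w' (eXi j) - H w' (ex j) * H w (eXi j))

def weightedL1 (J : ℝ) (w : E) : ℝ :=
  J * ∑ i, |w.1 i| + ∑ i, |w.2 i|

def weightedSq (J : ℝ) (w : E) : ℝ :=
  J ^ 2 * ∑ i, w.1 i ^ 2 + ∑ i, w.2 i ^ 2

def weightedRot (J : ℝ) (w : E) : E :=
  (fun j => w.2 j / J, fun j => -(J * w.1 j))

theorem eq_sum_smul_ex_add_sum_smul_eXi (w : E) :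
    w = ∑ i, w.1 i • ex i + ∑ i, w.2 i • eXi i := by
  refine Prod.ext ?_ ?_ <;>
    simp [ex, eXi, Prod.fst_sum, Prod.snd_sum, ← Pi.single_smul, Finset.univ_sum_single]

theorem abs_apply_le_of_forall_abs_apply_ex_le (f : E →L[ℝ] ℝ) {A B : ℝ}
    (hA : ∀ i, |f (ex i)| ≤ A) (hB : ∀ i, |f (eXi i)| ≤ B) (w : E) :
    |f w| ≤ A * ∑ i, |w.1 i| + B * ∑ i, |w.2 i| := by
  conv_lhs => rw [eq_sum_smul_ex_add_sum_smul_eXi w]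
  simp only [map_add, map_sum, map_smul, smul_eq_mul, Finset.mul_sum]
  refine (abs_add_le _ _).trans (add_le_add ?_ ?_) <;>
    refine (Finset.abs_sum_le_sum_abs _ _).trans (Finset.sum_le_sum fun i _ => ?_) <;>
    rw [abs_mul, mul_comm]
  · exact mul_le_mul_of_nonneg_right (hA i) (abs_nonneg _)
  · exact mul_le_mul_of_nonneg_right (hB i) (abs_nonneg _)

theorem weightedL1_weightedRot {J : ℝ} (hJ : 0 < J) (w : E) :
    weightedL1 J (weightedRot J w) = weightedL1 J w := by
  simp only [weightedL1, weightedRot, abs_div, abs_neg, abs_mul, abs_of_pos hJ, ← Finset.sum_div,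
    ← Finset.mul_sum]
  field_simp
  ring

theorem symplecticForm_weightedRot {J : ℝ} (hJ : J ≠ 0) (w : E) :
    J * symplecticForm w (weightedRot J w) = weightedSq J w := by
  simp only [symplecticForm, weightedSq, weightedRot, Finset.mul_sum, ← Finset.sum_add_distrib]
  refine Finset.sum_congr rfl fun j _ => ?_
  field_simp
  ring

theorem weightedL1_sq_le (J : ℝ) (w : E) : weightedL1 J w ^ 2 ≤ 2 * n * weightedSq J w := by
  have h₁ := sq_sum_le_card_mul_sum_sq (s := Finset.univ) (f := fun i => |w.1 i|)
  have h₂ := sq_sum_le_card_mul_sum_sq (s := Finset.univ) (f := fun i => |w.2 i|)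
  simp only [sq_abs, Finset.card_univ, Fintype.card_fin] at h₁ h₂
  unfold weightedL1 weightedSq
  nlinarith [sq_nonneg (J * ∑ i, |w.1 i| - ∑ i, |w.2 i|),
    mul_le_mul_of_nonneg_left h₁ (sq_nonneg J)]

theorem eq_zero_of_weightedSq_eq_zero {J : ℝ} (hJ : J ≠ 0) {w : E} (h : weightedSq J w = 0) :
    w = 0 := by
  have hP : 0 ≤ ∑ i, w.1 i ^ 2 := by positivity
  have hQ : 0 ≤ ∑ i, w.2 i ^ 2 := by positivity
  have hJ2 : 0 < J ^ 2 := by positivity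
  unfold weightedSq at h
  have h₁ : ∑ i, w.1 i ^ 2 = 0 := by nlinarith
  have h₂ : ∑ i, w.2 i ^ 2 = 0 := by linarith [mul_nonneg hJ2.le hP]
  rw [Fintype.sum_eq_zero_iff_of_nonneg fun _ => sq_nonneg _] at h₁ h₂
  ext i
  · simpa using congrFun h₁ i
  · simpa using congrFun h₂ i

theorem abs_hessianCorrection_le (H : E →L[ℝ] E →L[ℝ] ℝ) {a b : ℝ} {φ : E → ℝ}
    (hx : ∀ v j, |H v (ex j)| ≤ a * φ v) (hξ : ∀ v j, |H v (eXi j)| ≤ b * φ v) (w w' : E) :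
    |hessianCorrection H w w'| ≤ 2 * n * (a * b) * (φ w * φ w') := by
  have hterm : ∀ v v' j, |H v (ex j) * H v' (eXi j)| ≤ a * φ v * (b * φ v') := fun v v' j => by
    rw [abs_mul]
    exact mul_le_mul (hx v j) (hξ v' j) (abs_nonneg _) ((abs_nonneg _).trans (hx v j))
  calc |hessianCorrection H w w'|
      ≤ ∑ j, |H w (ex j) * H w' (eXi j) - H w' (ex j) * H w (eXi j)| :=
        Finset.abs_sum_le_sum_abs _ _
    _ ≤ ∑ _j : Fin n, (a * φ w * (b * φ w') + a * φ w' * (b * φ w)) :=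
        Finset.sum_le_sum fun j _ => (abs_sub _ _).trans (add_le_add (hterm w w' j) (hterm w' w j))
    _ = 2 * n * (a * b) * (φ w * φ w') := by
        rw [Finset.sum_const, Finset.card_univ, Fintype.card_fin, nsmul_eq_mul]
        ring

theorem eq_zero_of_forall_symplecticForm_add_hessianCorrection_eq_zero
    (H : E →L[ℝ] E →L[ℝ] ℝ) {J ε : ℝ} (hJ : 0 < J) (hε : 0 ≤ ε) (hsmall : 2 * n * ε < 1)
    (hxx : ∀ i j, |H (ex i) (ex j)| ≤ ε * J) (hξx : ∀ i j, |H (eXi i) (ex j)| ≤ ε)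
    (hxξ : ∀ i j, |H (ex i) (eXi j)| ≤ ε) (hξξ : ∀ i j, |H (eXi i) (eXi j)| ≤ ε / J)
    {w : E} (hw : ∀ w', symplecticForm w w' + hessianCorrection H w w' = 0) : w = 0 := by
  have hx : ∀ v j, |H v (ex j)| ≤ ε * weightedL1 J v := fun v j => by
    refine (abs_apply_le_of_forall_abs_apply_ex_le (H.flip (ex j)) (hxx · j) (hξx · j) v).trans_eq
      ?_
    unfold weightedL1; ring
  have hξ : ∀ v j, |H v (eXi j)| ≤ ε / J * weightedL1 J v := fun v j => by
    refine (abs_apply_le_of_forall_abs_apply_ex_le (H.flip (eXi j)) (hxξ · j) (hξξ · j) v).trans_eq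
      ?_
    unfold weightedL1; field_simp
  set w' := weightedRot J w
  have hcorr := abs_hessianCorrection_le H hx hξ w w'
  rw [weightedL1_weightedRot hJ] at hcorr
  have hstd := symplecticForm_weightedRot hJ.ne' w
  have hS : weightedSq J w ≤ (2 * n * ε) ^ 2 * weightedSq J w := calc
    weightedSq J w = -(J * hessianCorrection H w w') := by
      rw [← hstd, ← mul_neg, eq_neg_of_add_eq_zero_left (hw w')]
    _ ≤ J * |hessianCorrection H w w'| := by
      rw [← mul_neg]; exact mul_le_mul_of_nonneg_left (neg_le_abs _) hJ.le
    _ ≤ J * (2 * n * (ε * (ε / J)) * (weightedL1 J w * weightedL1 J w)) :=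
      mul_le_mul_of_nonneg_left hcorr hJ.le
    _ = 2 * n * ε ^ 2 * weightedL1 J w ^ 2 := by field_simp
    _ ≤ 2 * n * ε ^ 2 * (2 * n * weightedSq J w) :=
      mul_le_mul_of_nonneg_left (weightedL1_sq_le J w) (by positivity)
    _ = (2 * n * ε) ^ 2 * weightedSq J w := by ring
  have hS₀ : 0 ≤ weightedSq J w := by unfold weightedSq; positivity
  have hsmall' : (2 * n * ε) ^ 2 < 1 := pow_lt_one₀ (by positivity) hsmall two_ne_zero
  exact eq_zero_of_weightedSq_eq_zero hJ.ne' (by nlinarith)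

theorem one_le_Jb (ξ : Fin n → ℝ) : 1 ≤ Jb ξ :=
  Real.one_le_sqrt.mpr (le_add_of_nonneg_right (by positivity))

theorem re_sum_Dzeta_mul_Dz {G : E → ℝ} {p : E} (hG : DifferentiableAt ℝ (fderiv ℝ G) p)
    (w w' : E) :
    (∑ j, (Dzeta G j p w * Dz G j p w' - Dzeta G j p w' * Dz G j p w)).re =
      symplecticForm w w' + hessianCorrection (fderiv ℝ (fderiv ℝ G) p) w w' := by
  simp only [Dz_apply hG, Dzeta_apply hG, re_sum, symplecticForm, hessianCorrection,
    ← Finset.sum_add_distrib]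
  refine Finset.sum_congr rfl fun j _ => ?_
  simp only [sub_re, mul_re, add_re, add_im, sub_im, mul_im, ofReal_re, ofReal_im, I_re, I_im]
  ring

end

/-- For `ε₀` sufficiently small, the pullback of `Re(dζ∧dz)` to `T*𝕋ⁿ` under
`(x,ξ) ↦ (x+i∂_ξG, ξ−i∂_xG)` is nondegenerate: the deformation `Λ_G` is
ℝ-symplectic. -/
theorem deformation_R_symplectic (n : ℕ) :
    ∃ ε₁ : ℝ, 0 < ε₁ ∧ ∀ ε₀ : ℝ, 0 < ε₀ → ε₀ ≤ ε₁ →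
      ∀ G : (Fin n → ℝ) × (Fin n → ℝ) → ℝ, ContDiff ℝ 2 G →
      (∀ (x ξ : Fin n → ℝ) (m : Fin n → ℤ),
        G (x + fun i => 2 * Real.pi * (m i), ξ) = G (x, ξ)) →
      (∀ p : (Fin n → ℝ) × (Fin n → ℝ), |G p| ≤ ε₀ * Jb p.2) →
      (∀ (p : (Fin n → ℝ) × (Fin n → ℝ)) (i : Fin n),
        |fderiv ℝ G p (ex i)| ≤ ε₀ * Jb p.2) →
      (∀ (p : (Fin n → ℝ) × (Fin n → ℝ)) (i : Fin n),
        |fderiv ℝ G p (eXi i)| ≤ ε₀) →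
      (∀ (p : (Fin n → ℝ) × (Fin n → ℝ)) (i j : Fin n),
        |fderiv ℝ (fun q => fderiv ℝ G q (ex i)) p (ex j)| ≤ ε₀ * Jb p.2) →
      (∀ (p : (Fin n → ℝ) × (Fin n → ℝ)) (i j : Fin n),
        |fderiv ℝ (fun q => fderiv ℝ G q (ex i)) p (eXi j)| ≤ ε₀) →
      (∀ (p : (Fin n → ℝ) × (Fin n → ℝ)) (i j : Fin n),
        |fderiv ℝ (fun q => fderiv ℝ G q (eXi i)) p (eXi j)| ≤ ε₀ / Jb p.2) →
      ∀ (p w₁ : (Fin n → ℝ) × (Fin n → ℝ)),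
        (∀ w₂ : (Fin n → ℝ) × (Fin n → ℝ),
          (∑ j, (Dzeta G j p w₁ * Dz G j p w₂ - Dzeta G j p w₂ * Dz G j p w₁)).re = 0) →
        w₁ = 0 := by
  refine ⟨1 / (2 * n + 1), by positivity, ?_⟩
  intro ε₀ hε₀ hε₁ G hG _ _ _ _ hxx hxξ hξξ p w hw
  have hG' : DifferentiableAt ℝ (fderiv ℝ G) p :=
    (hG.fderiv_right (m := 1) le_rfl).differentiable one_ne_zero p
  have hsmall : 2 * n * ε₀ < 1 := by
    have := (le_div_iff₀ (by positivity)).mp hε₁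
    linarith
  refine eq_zero_of_forall_symplecticForm_add_hessianCorrection_eq_zero _
    (zero_lt_one.trans_le (one_le_Jb p.2)) hε₀.le hsmall
    (fun i j => ?_) (fun i j => ?_) (fun i j => ?_) (fun i j => ?_)
    fun w' => by rw [← re_sum_Dzeta_mul_Dz hG', hw]
  · rw [← fderiv_fderiv_apply_eq hG']; exact hxx p j i
  · rw [← fderiv_fderiv_apply_eq hG']; exact hxξ p j i
  · rw [hG.contDiffAt.isSymmSndFDerivAt (by simp), ← fderiv_fderiv_apply_eq hG']
    exact hxξ p i j
  · rw [← fderiv_fderiv_apply_eq hG']; exact hξξ p j i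

end
end
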